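/- For every n ≥ 2 and every 0 < i < n, the inclusion (Λⁿᵢ)♯ → (Δⁿ)♯, of the inner horn with all of its 2-simplices thin into the n-simplex with all of its 2-simplices thin, is a scaled anodyne map. -/

import Mathlib

open CategoryTheory Simplicial
namespace ScaledSSet

def stdSimplex (n : ℕ) : SSet.{0} where
  obj m := Fin (m.unop.len + 1) →o Fin (n + 1)
  map φ := TypeCat.ofHom (fun f => f.comp φ.unop.toOrderHom)
  map_id m := rfl
  map_comp φ ψ := rfl

instance stdFunLike (n : ℕ) (m : SimplexCategoryᵒᵖ) :
    FunLike ((stdSimplex n).obj m) (Fin (m.unop.len + 1)) (Fin (n + 1)) :=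
  inferInstanceAs (FunLike (Fin (m.unop.len + 1) →o Fin (n + 1)) _ _)

@[simp] lemma stdSimplex_mk_apply {n : ℕ} {m : SimplexCategoryᵒᵖ}
    (f : Fin (m.unop.len + 1) → Fin (n + 1)) (hf : Monotone f) (x : Fin (m.unop.len + 1)) :
    (⟨f, hf⟩ : (stdSimplex n).obj m) x = f x := rfl

@[simp] lemma stdSimplex_map_apply {n : ℕ} {m m' : SimplexCategoryᵒᵖ} (φ : m ⟶ m')
    (f : (stdSimplex n).obj m) (x : Fin (m'.unop.len + 1)) :
    ((stdSimplex n).map φ f) x = f (φ.unop.toOrderHom x) := rfl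

def subOf (X : SSet.{0}) (P : ∀ m : SimplexCategoryᵒᵖ, Set (X.obj m))
    (hP : ∀ {m m' : SimplexCategoryᵒᵖ} (φ : m ⟶ m') {σ : X.obj m},
      σ ∈ P m → X.map φ σ ∈ P m') : SSet.{0} where
  obj m := P m
  map φ := TypeCat.ofHom (fun σ => ⟨X.map φ σ.1, hP φ σ.2⟩)
  map_id _ := by ext σ; exact FunctorToTypes.map_id_apply X σ.1
  map_comp φ ψ := by ext σ; exact FunctorToTypes.map_comp_apply X φ ψ σ.1

def subIncl (X : SSet.{0}) (P : ∀ m : SimplexCategoryᵒᵖ, Set (X.obj m))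
    (hP : ∀ {m m' : SimplexCategoryᵒᵖ} (φ : m ⟶ m') {σ : X.obj m},
      σ ∈ P m → X.map φ σ ∈ P m') : subOf X P hP ⟶ X where
  app _ := TypeCat.ofHom (fun σ => σ.1)
  naturality _ _ _ := rfl

def IsDegen2 (X : SSet.{0}) (σ : X _⦋2⦌) : Prop :=
  ∃ τ : X _⦋1⦌, σ = X.σ 0 τ ∨ σ = X.σ 1 τ

lemma isDegen2_of_sub (X : SSet.{0}) (P : ∀ m : SimplexCategoryᵒᵖ, Set (X.obj m))
    (hP : ∀ {m m' : SimplexCategoryᵒᵖ} (φ : m ⟶ m') {σ : X.obj m},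
      σ ∈ P m → X.map φ σ ∈ P m')
    (σ : (subOf X P hP) _⦋2⦌) (h : IsDegen2 (subOf X P hP) σ) : IsDegen2 X σ.1 := by
  obtain ⟨τ, h | h⟩ := h
  · exact ⟨τ.1, Or.inl (by subst h; rfl)⟩
  · exact ⟨τ.1, Or.inr (by subst h; rfl)⟩

lemma isDegen2_map {X Y : SSet.{0}} (f : X ⟶ Y) {σ : X _⦋2⦌}
    (h : IsDegen2 X σ) : IsDegen2 Y (f.app _ σ) := by
  obtain ⟨τ, h | h⟩ := h
  · exact ⟨f.app _ τ, Or.inl (by subst h; exact NatTrans.naturality_apply f _ τ)⟩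
  · exact ⟨f.app _ τ, Or.inr (by subst h; exact NatTrans.naturality_apply f _ τ)⟩

structure SScaled : Type 1 where
  carrier : SSet.{0}
  thin : Set (carrier _⦋2⦌)
  degen_mem : ∀ σ : carrier _⦋2⦌, IsDegen2 carrier σ → σ ∈ thin

@[ext]
structure SHom (A B : SScaled) : Type where
  map : A.carrier ⟶ B.carrier
  preserves : ∀ σ ∈ A.thin, map.app (Opposite.op (SimplexCategory.mk 2)) σ ∈ B.thin

instance : Category SScaled where
  Hom := SHom
  id A := ⟨𝟙 A.carrier, fun σ h => by simpa using h⟩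
  comp f g := ⟨f.map ≫ g.map, fun σ h => by
    simpa using g.preserves _ (f.preserves _ h)⟩
  id_comp f := by apply SHom.ext; simp
  comp_id f := by apply SHom.ext; simp
  assoc f g h := by apply SHom.ext; simp

def SScaled.restrict (B : SScaled) (P : ∀ m : SimplexCategoryᵒᵖ, Set (B.carrier.obj m))
    (hP : ∀ {m m' : SimplexCategoryᵒᵖ} (φ : m ⟶ m') {σ : B.carrier.obj m},
      σ ∈ P m → B.carrier.map φ σ ∈ P m') : SScaled where
  carrier := subOf B.carrier P hP
  thin := {σ | σ.1 ∈ B.thin}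
  degen_mem σ h := B.degen_mem _ (isDegen2_of_sub _ _ _ _ h)

def SScaled.restrictIncl (B : SScaled) (P : ∀ m : SimplexCategoryᵒᵖ, Set (B.carrier.obj m))
    (hP : ∀ {m m' : SimplexCategoryᵒᵖ} (φ : m ⟶ m') {σ : B.carrier.obj m},
      σ ∈ P m → B.carrier.map φ σ ∈ P m') : B.restrict P hP ⟶ B where
  map := subIncl B.carrier P hP
  preserves _ h := h

def tri {n : ℕ} (a b c : Fin (n + 1)) (hab : a ≤ b) (hbc : b ≤ c) :
    (stdSimplex n) _⦋2⦌ :=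
  ⟨![a, b, c], by
    intro i j hij
    fin_cases i <;> fin_cases j <;>
      simp_all [Matrix.cons_val_zero, Matrix.cons_val_one, Matrix.head_cons] <;>
      first
        | rfl
        | exact hab
        | exact hbc
        | exact le_trans hab hbc⟩

/-! ### The generating scaled anodyne maps -/

/-- The membership predicate of the horn `Λⁿᵢ ⊆ Δⁿ`: the simplices whose vertices,
together with `i`, do not exhaust `[n]`. -/
def hornP (n : ℕ) (i : Fin (n + 1)) :
    ∀ m : SimplexCategoryᵒᵖ, Set ((stdSimplex n).obj m) :=
  fun _ => {f | ∃ s : Fin (n + 1), s ≠ i ∧ ∀ x, f x ≠ s}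

lemma hornP_closed (n : ℕ) (i : Fin (n + 1)) :
    ∀ {m m' : SimplexCategoryᵒᵖ} (φ : m ⟶ m') {σ : (stdSimplex n).obj m},
      σ ∈ hornP n i m → (stdSimplex n).map φ σ ∈ hornP n i m' := by
  rintro m m' φ σ ⟨s, hsi, hs⟩
  exact ⟨s, hsi, fun x => hs _⟩

/-- The 2-simplex `Δ^{i-1,i,i+1}` of `Δⁿ`, for `0 < i < n`. -/
def an1Tri (n i : ℕ) (h0 : 0 < i) (hn : i < n) : (stdSimplex n) _⦋2⦌ :=
  tri ⟨i - 1, by omega⟩ ⟨i, by omega⟩ ⟨i + 1, by omega⟩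
    (Fin.mk_le_mk.mpr (by omega)) (Fin.mk_le_mk.mpr (by omega))

/-- The target of the generating map (An1): `Δⁿ` scaled by `{Δ^{i-1,i,i+1}} ∪ {degenerate}`. -/
def an1Target (n i : ℕ) (h0 : 0 < i) (hn : i < n) : SScaled where
  carrier := stdSimplex n
  thin := {σ | IsDegen2 _ σ ∨ σ = an1Tri n i h0 hn}
  degen_mem _ h := Or.inl h

/-- The source of the generating map (An1): the horn `Λⁿᵢ` with the restricted scaling. -/
def an1Source (n i : ℕ) (h0 : 0 < i) (hn : i < n) : SScaled :=
  (an1Target n i h0 hn).restrict (hornP n ⟨i, by omega⟩) (hornP_closed n ⟨i, by omega⟩)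

/-- The generating scaled anodyne map (An1). -/
def an1Map (n i : ℕ) (h0 : 0 < i) (hn : i < n) :
    an1Source n i h0 hn ⟶ an1Target n i h0 hn :=
  SScaled.restrictIncl (an1Target n i h0 hn) (hornP n ⟨i, by omega⟩)
    (hornP_closed n ⟨i, by omega⟩)

/-- The scaling `T₀` of `Δ⁴` appearing in the generating map (An2). -/
def an2T0 : Set ((stdSimplex 4) _⦋2⦌) :=
  {σ | IsDegen2 _ σ ∨
    σ = tri (0 : Fin 5) 2 4 (by decide) (by decide) ∨
    σ = tri (1 : Fin 5) 2 3 (by decide) (by decide) ∨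
    σ = tri (0 : Fin 5) 1 3 (by decide) (by decide) ∨
    σ = tri (1 : Fin 5) 3 4 (by decide) (by decide) ∨
    σ = tri (0 : Fin 5) 1 2 (by decide) (by decide)}

def an2Source : SScaled where
  carrier := stdSimplex 4
  thin := an2T0
  degen_mem _ h := Or.inl h

def an2Target : SScaled where
  carrier := stdSimplex 4
  thin := an2T0 ∪
    {tri (0 : Fin 5) 3 4 (by decide) (by decide),
     tri (0 : Fin 5) 1 4 (by decide) (by decide)}
  degen_mem _ h := Or.inl (Or.inl h)

/-- The generating scaled anodyne map (An2). -/
def an2Map : an2Source ⟶ an2Target where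
  map := 𝟙 _
  preserves σ h := Or.inl h

/-- The collapse of a simplicial subset `A ⊆ X` to a point: a concrete model of the
pushout `X ⨿_A Δ⁰` (for `A` nonempty in each degree). -/
def collapse (X : SSet.{0}) (A : ∀ m : SimplexCategoryᵒᵖ, Set (X.obj m))
    (hA : ∀ {m m' : SimplexCategoryᵒᵖ} (φ : m ⟶ m') {σ : X.obj m},
      σ ∈ A m → X.map φ σ ∈ A m') : SSet.{0} where
  obj m := Quot (fun f g : X.obj m => f ∈ A m ∧ g ∈ A m)
  map φ := TypeCat.ofHom (Quot.map (X.map φ) (fun _ _ h => ⟨hA φ h.1, hA φ h.2⟩))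
  map_id m := by
    ext σ
    induction σ using Quot.ind with
    | _ f => exact congrArg (Quot.mk _) (FunctorToTypes.map_id_apply X f)
  map_comp φ ψ := by
    ext σ
    induction σ using Quot.ind with
    | _ f => exact congrArg (Quot.mk _) (FunctorToTypes.map_comp_apply X φ ψ f)

/-- The simplices of `Δⁿ` lying in the edge `Δ^{0,1}`. -/
def edge01P (n : ℕ) : ∀ m : SimplexCategoryᵒᵖ, Set ((stdSimplex n).obj m) :=
  fun _ => {f | ∀ x, (f x).val ≤ 1}

lemma edge01P_closed (n : ℕ) :
    ∀ {m m' : SimplexCategoryᵒᵖ} (φ : m ⟶ m') {σ : (stdSimplex n).obj m},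
      σ ∈ edge01P n m → (stdSimplex n).map φ σ ∈ edge01P n m' := by
  intro m m' φ σ h x
  exact h _

/-- The underlying simplicial set of the target of (An3): `Δⁿ ⨿_{Δ^{0,1}} Δ⁰`. -/
def an3TargetSSet (n : ℕ) (hn : 2 < n) : SSet.{0} :=
  collapse (stdSimplex n) (edge01P n) (edge01P_closed n)

def an3Horn (n : ℕ) (hn : 2 < n) : SSet.{0} :=
  subOf (stdSimplex n) (hornP n 0) (hornP_closed n 0)

/-- The underlying simplicial set of the source of (An3): `Λⁿ₀ ⨿_{Δ^{0,1}} Δ⁰`. -/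
def an3SourceSSet (n : ℕ) (hn : 2 < n) : SSet.{0} :=
  collapse (an3Horn n hn) (fun m => {f | f.1 ∈ edge01P n m})
    (fun {m m'} φ {σ} h => edge01P_closed n φ h)

def an3Tri (n : ℕ) (hn : 2 < n) : (stdSimplex n) _⦋2⦌ :=
  tri ⟨0, by omega⟩ ⟨1, by omega⟩ ⟨n, by omega⟩
    (Fin.mk_le_mk.mpr (by omega)) (Fin.mk_le_mk.mpr (by omega))

lemma an3Tri_mem_horn (n : ℕ) (hn : 2 < n) :
    an3Tri n hn ∈ hornP n 0 (Opposite.op (SimplexCategory.mk 2)) := by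
  refine ⟨⟨2, by omega⟩, Fin.ne_of_val_ne (by simp), fun x => ?_⟩
  fin_cases x
  · exact Fin.ne_of_val_ne (show (0 : ℕ) ≠ 2 by omega)
  · exact Fin.ne_of_val_ne (show (1 : ℕ) ≠ 2 by omega)
  · exact Fin.ne_of_val_ne (show (n : ℕ) ≠ 2 by omega)

def an3Target (n : ℕ) (hn : 2 < n) : SScaled where
  carrier := an3TargetSSet n hn
  thin := {x | IsDegen2 _ x ∨ x = Quot.mk _ (an3Tri n hn)}
  degen_mem _ h := Or.inl h

def an3Source (n : ℕ) (hn : 2 < n) : SScaled where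
  carrier := an3SourceSSet n hn
  thin := {x | IsDegen2 _ x ∨ x = Quot.mk _ ⟨an3Tri n hn, an3Tri_mem_horn n hn⟩}
  degen_mem _ h := Or.inl h

/-- The generating scaled anodyne map (An3). -/
def an3proj (n : ℕ) (hn : 2 < n) : an3SourceSSet n hn ⟶ an3TargetSSet n hn where
  app m := TypeCat.ofHom (Quot.map (fun (f : (an3Horn n hn).obj m) => f.1) (fun _ _ h => ⟨h.1, h.2⟩))
  naturality _ _ φ := by ext σ; induction σ using Quot.ind; rfl

def an3Map (n : ℕ) (hn : 2 < n) : an3Source n hn ⟶ an3Target n hn where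
  map := an3proj n hn
  preserves σ h := by
    obtain h | h := h
    · exact Or.inl (isDegen2_map (an3proj n hn) h)
    · exact Or.inr (by subst h; rfl)

/-! ### Weakly saturated classes and scaled anodyne maps -/

section Saturation

open Limits

variable {C : Type*} [Category C]

/-- `f` is a retract of `g` (in the arrow category). -/
def IsRetractOf {A B X Y : C} (f : A ⟶ B) (g : X ⟶ Y) : Prop :=
  ∃ (i : A ⟶ X) (p : X ⟶ A) (j : B ⟶ Y) (q : Y ⟶ B),
    i ≫ p = 𝟙 A ∧ j ≫ q = 𝟙 B ∧ i ≫ g = f ≫ j ∧ g ≫ q = p ≫ f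

/-- The restriction, to `Set.Iio j`, of a functor indexed by a (well-)ordered type,
viewed as a cocone with apex `F.obj j`. -/
@[simps]
def restCocone {J : Type} [Preorder J] (F : J ⥤ C) (j : J) :
    Cocone ((Monotone.functor (f := (Subtype.val : Set.Iio j → J))
      (fun _ _ h => h)) ⋙ F) where
  pt := F.obj j
  ι :=
    { app := fun i => F.map (homOfLE i.2.le)
      naturality := fun i i' hii' => by
        dsimp [Monotone.functor]
        rw [← F.map_comp]
        simp }

/-- A class of morphisms is weakly saturated if it is stable under pushouts
(cobase change), retracts, and transfinite composition. -/
structure IsWeaklySaturated (P : MorphismProperty C) : Prop where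
  pushouts : ∀ ⦃A B A' B' : C⦄ (f : A ⟶ B) (g : A ⟶ A') (h : B ⟶ B') (i : A' ⟶ B'),
    IsPushout f g h i → P f → P i
  retracts : ∀ ⦃A B X Y : C⦄ (f : A ⟶ B) (g : X ⟶ Y), IsRetractOf f g → P g → P f
  transfinite : ∀ (J : Type) [LinearOrder J] [OrderBot J] [SuccOrder J]
    [WellFoundedLT J] (F : J ⥤ C) (c : Cocone F) (_ : IsColimit c)
    (_ : ∀ j : J, Order.IsSuccLimit j → Nonempty (IsColimit (restCocone F j)))
    (_ : ∀ j : J, ¬IsMax j → P (F.map (homOfLE (Order.le_succ j)))),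
    P (c.ι.app ⊥)

end Saturation

/-- The generating scaled anodyne maps (An1), (An2), (An3). -/
inductive AnodyneGenerator : ∀ ⦃A B : SScaled⦄, (A ⟶ B) → Prop where
  | an1 (n i : ℕ) (h0 : 0 < i) (hn : i < n) : AnodyneGenerator (an1Map n i h0 hn)
  /-- (An2) -/
  | an2 : AnodyneGenerator an2Map
  /-- (An3) -/
  | an3 (n : ℕ) (hn : 2 < n) : AnodyneGenerator (an3Map n hn)

/-- A map of scaled simplicial sets is *scaled anodyne* if it lies in the weakly
saturated class of maps generated by the maps (An1), (An2) and (An3); that is,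
if it lies in every weakly saturated class of morphisms of `SScaled` containing
these generating maps. -/
def ScaledAnodyne : MorphismProperty SScaled := fun _ _ f =>
  ∀ P : MorphismProperty SScaled, IsWeaklySaturated P →
    (∀ ⦃A B : SScaled⦄ (g : A ⟶ B), AnodyneGenerator g → P g) → P f

/-- `Δⁿ` with *all* of its 2-simplices thin. -/
def sharpSimplex (n : ℕ) : SScaled where
  carrier := stdSimplex n
  thin := Set.univ
  degen_mem _ _ := Set.mem_univ _

/-! ### Auxiliary material: weakly saturated classes are closed under composition -/

section SaturationHelpers

open Limits

/-- A bespoke linearly ordered three-element index type, used to express binary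
composition as a transfinite composition. -/
inductive Three : Type where
  | z | o | t
  deriving DecidableEq

namespace Three

def toFin : Three → Fin 3 := fun x => match x with
  | z => 0
  | o => 1
  | t => 2

instance : Fintype Three :=
  ⟨⟨{z, o, t}, by decide⟩, fun x => by cases x <;> decide⟩

instance : LinearOrder Three :=
  LinearOrder.lift' toFin (fun a b => by cases a <;> cases b <;> simp [toFin] <;> decide)

instance : OrderBot Three where
  bot := z
  bot_le a := by cases a <;> decide

instance : OrderTop Three where
  top := t
  le_top a := by cases a <;> decide

def succFn : Three → Three := fun x => match x with
  | z => o
  | o => t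
  | t => t

instance : SuccOrder Three where
  succ := succFn
  le_succ a := by cases a <;> decide
  max_of_succ_le {a} h := by
    cases a
    · exact absurd h (by decide)
    · exact absurd h (by decide)
    · intro b _; cases b <;> decide
  succ_le_of_lt {a b} h := by
    cases a <;> cases b <;> first | (exact absurd h (by decide)) | decide

instance : WellFoundedLT Three := Finite.to_wellFoundedLT

lemma covBy_z_o : (z : Three) ⋖ o :=
  ⟨by decide, fun c h1 h2 => by cases c <;> revert h1 h2 <;> decide⟩

lemma covBy_o_t : (o : Three) ⋖ t :=
  ⟨by decide, fun c h1 h2 => by cases c <;> revert h1 h2 <;> decide⟩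

end Three

variable {𝒞 : Type*} [Category 𝒞]

/-- The chain `A ⟶ B ⟶ C` as a functor out of `Three`. -/
def chain3 {A B C : 𝒞} (f : A ⟶ B) (g : B ⟶ C) : Three ⥤ 𝒞 where
  obj x := match x with
    | .z => A
    | .o => B
    | .t => C
  map {x y} h := match x, y with
    | .z, .z => 𝟙 A
    | .z, .o => f
    | .z, .t => f ≫ g
    | .o, .o => 𝟙 B
    | .o, .t => g
    | .t, .t => 𝟙 C
    | .o, .z => absurd (leOfHom h) (by decide)
    | .t, .z => absurd (leOfHom h) (by decide)
    | .t, .o => absurd (leOfHom h) (by decide)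
  map_id x := by cases x <;> rfl
  map_comp {x y w} h1 h2 := by
    cases x <;> cases y <;> cases w <;>
      first
        | exact absurd (leOfHom h1) (by decide)
        | exact absurd (leOfHom h2) (by decide)
        | simp

/-- The tautological cocone over a diagram indexed by an order with a top element. -/
def topCocone {J : Type} [Preorder J] [OrderTop J] (F : J ⥤ 𝒞) : Cocone F where
  pt := F.obj ⊤
  ι :=
    { app := fun j => F.map (homOfLE le_top)
      naturality := fun i j h => by
        dsimp
        rw [Category.comp_id, ← F.map_comp]
        congr 1 }

def topCoconeIsColimit {J : Type} [Preorder J] [OrderTop J] (F : J ⥤ 𝒞) :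
    IsColimit (topCocone F) where
  desc s := s.ι.app ⊤
  fac s j := s.w _
  uniq s m hm := by
    have h := hm ⊤
    have e : (homOfLE (le_top : (⊤ : J) ≤ ⊤)) = 𝟙 (⊤ : J) := Subsingleton.elim _ _
    rw [show (topCocone F).ι.app ⊤ = F.map (homOfLE le_top) from rfl, e, F.map_id] at h
    exact (Category.id_comp m).symm.trans h

/-- A weakly saturated class is closed under (binary) composition. -/
lemma IsWeaklySaturated.mem_comp {P : MorphismProperty 𝒞} (hP : IsWeaklySaturated P)
    {A B C : 𝒞} {f : A ⟶ B} {g : B ⟶ C} (hf : P f) (hg : P g) : P (f ≫ g) := by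
  have key := hP.transfinite Three (chain3 f g) (topCocone _) (topCoconeIsColimit _)
    (fun j hj => by
      exfalso
      cases j
      · exact hj.not_isMin (fun b _ => by cases b <;> decide)
      · exact hj.isSuccPrelimit _ Three.covBy_z_o
      · exact hj.isSuccPrelimit _ Three.covBy_o_t)
    (fun j hj => by
      cases j
      · exact hf
      · exact hg
      · exact absurd (fun b _ => by cases b <;> decide) hj)
  exact key

end SaturationHelpers
/-! ### Simplicial helper lemmas -/

section SimplicialHelpers

lemma eq_tri {n : ℕ} (σ : (stdSimplex n) _⦋2⦌) :
    σ = tri (σ 0) (σ 1) (σ 2) (OrderHom.monotone σ (by decide))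
      (OrderHom.monotone σ (by decide)) := by
  refine DFunLike.ext _ _ fun x => ?_
  fin_cases x <;> rfl

lemma tri_congr {n : ℕ} {a b c a' b' c' : Fin (n + 1)} {hab : a ≤ b} {hbc : b ≤ c}
    {hab' : a' ≤ b'} {hbc' : b' ≤ c'} (ha : a = a') (hb : b = b') (hc : c = c') :
    tri a b c hab hbc = tri a' b' c' hab' hbc' := by
  subst ha; subst hb; subst hc; rfl

lemma isDegen2_of_01 {n : ℕ} (σ : (stdSimplex n) _⦋2⦌) (h : σ 0 = σ 1) :
    IsDegen2 (stdSimplex n) σ := by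
  refine ⟨⟨![σ 0, σ 2], ?_⟩, Or.inl ?_⟩
  · intro i j hij
    fin_cases i <;> fin_cases j
    · exact le_refl _
    · exact OrderHom.monotone σ (by decide)
    · exact absurd hij (by decide)
    · exact le_refl _
  · refine DFunLike.ext _ _ fun x => ?_
    fin_cases x
    · rfl
    · exact h.symm
    · rfl

lemma isDegen2_of_12 {n : ℕ} (σ : (stdSimplex n) _⦋2⦌) (h : σ 1 = σ 2) :
    IsDegen2 (stdSimplex n) σ := by
  refine ⟨⟨![σ 0, σ 1], ?_⟩, Or.inr ?_⟩
  · intro i j hij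
    fin_cases i <;> fin_cases j
    · exact le_refl _
    · exact OrderHom.monotone σ (by decide)
    · exact absurd hij (by decide)
    · exact le_refl _
  · refine DFunLike.ext _ _ fun x => ?_
    fin_cases x
    · rfl
    · rfl
    · exact h.symm

lemma tri_mem_horn {n : ℕ} {a b c : Fin (n + 1)} {hab : a ≤ b} {hbc : b ≤ c}
    (i s : Fin (n + 1)) (hsi : s ≠ i) (ha : a ≠ s) (hb : b ≠ s) (hc : c ≠ s) :
    tri a b c hab hbc ∈ hornP n i (Opposite.op (SimplexCategory.mk 2)) := by
  refine ⟨s, hsi, fun x => ?_⟩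
  fin_cases x
  exacts [ha, hb, hc]

lemma mem_horn_of_big {n : ℕ} (h4 : 4 ≤ n) (i : Fin (n + 1)) (σ : (stdSimplex n) _⦋2⦌) :
    σ ∈ hornP n i (Opposite.op (SimplexCategory.mk 2)) := by
  by_contra hc
  simp only [hornP, Set.mem_setOf_eq, not_exists, not_and, not_forall, not_not] at hc
  have hsub : (Finset.univ : Finset (Fin (n + 1))) ⊆ {σ 0, σ 1, σ 2, i} := by
    intro s _
    by_cases hsi : s = i
    · subst hsi; simp
    · obtain ⟨x, hx⟩ := hc s hsi
      fin_cases x <;> simp [← hx]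
  have h1 := Finset.card_le_card hsub
  have h2 : ({σ 0, σ 1, σ 2, i} : Finset (Fin (n + 1))).card ≤ 4 := by
    refine le_trans (Finset.card_insert_le _ _) (Nat.succ_le_succ ?_)
    refine le_trans (Finset.card_insert_le _ _) (Nat.succ_le_succ ?_)
    refine le_trans (Finset.card_insert_le _ _) (Nat.succ_le_succ ?_)
    simp
  rw [Finset.card_univ, Fintype.card_fin] at h1
  omega

/-- The map of standard simplices induced by a monotone map on vertices. -/
def vert {n m : ℕ} (v : Fin (m + 1) →o Fin (n + 1)) : stdSimplex m ⟶ stdSimplex n where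
  app k := TypeCat.ofHom (fun f => v.comp f)
  naturality k k' φ := by
    rfl

lemma vert_tri {n m : ℕ} (v : Fin (m + 1) →o Fin (n + 1)) {a b c : Fin (m + 1)}
    (hab : a ≤ b) (hbc : b ≤ c) :
    (vert v).app (Opposite.op (SimplexCategory.mk 2)) (tri a b c hab hbc) =
      tri (v a) (v b) (v c) (v.monotone hab) (v.monotone hbc) := by
  refine DFunLike.ext _ _ fun x => ?_
  fin_cases x <;> rfl

end SimplicialHelpers
/-! ### The intermediate scaled simplex and the two pushout squares -/

section Squares

open Limits

/-- `Δⁿ` scaled by degenerate simplices, the (An1)-triangle, and all simplices of the horn. -/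
def P1 (n i : ℕ) (h0 : 0 < i) (hin : i < n) : SScaled where
  carrier := stdSimplex n
  thin := {σ | IsDegen2 (stdSimplex n) σ ∨ σ = an1Tri n i h0 hin ∨
    σ ∈ hornP n ⟨i, by omega⟩ (Opposite.op (SimplexCategory.mk 2))}
  degen_mem _ h := Or.inl h

def gleft (n i : ℕ) (h0 : 0 < i) (hin : i < n) :
    an1Source n i h0 hin ⟶ (sharpSimplex n).restrict (hornP n ⟨i, by omega⟩)
      (hornP_closed n ⟨i, by omega⟩) where
  map := 𝟙 _
  preserves _ _ := Set.mem_univ _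

def htop (n i : ℕ) (h0 : 0 < i) (hin : i < n) :
    an1Target n i h0 hin ⟶ P1 n i h0 hin where
  map := 𝟙 _
  preserves _ hσ := hσ.elim (fun h => Or.inl h) (fun h => Or.inr (Or.inl h))

def g1 (n i : ℕ) (h0 : 0 < i) (hin : i < n) :
    (sharpSimplex n).restrict (hornP n ⟨i, by omega⟩)
      (hornP_closed n ⟨i, by omega⟩) ⟶ P1 n i h0 hin where
  map := subIncl (stdSimplex n) (hornP n ⟨i, by omega⟩) (hornP_closed n ⟨i, by omega⟩)
  preserves σ _ := Or.inr (Or.inr σ.2)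

def g2 (n i : ℕ) (h0 : 0 < i) (hin : i < n) : P1 n i h0 hin ⟶ sharpSimplex n where
  map := 𝟙 _
  preserves _ _ := Set.mem_univ _

def hsharp (n i : ℕ) (h0 : 0 < i) (hin : i < n) :
    an1Target n i h0 hin ⟶ sharpSimplex n where
  map := 𝟙 _
  preserves _ _ := Set.mem_univ _

/-- The pushout square exhibiting `g1` as a cobase change of the generating map (An1). -/
lemma sq1 (n i : ℕ) (h0 : 0 < i) (hin : i < n) :
    IsPushout (an1Map n i h0 hin) (gleft n i h0 hin) (htop n i h0 hin) (g1 n i h0 hin) := by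
  have w : an1Map n i h0 hin ≫ htop n i h0 hin = gleft n i h0 hin ≫ g1 n i h0 hin := by
    apply SHom.ext; rfl
  refine IsPushout.of_isColimit' ⟨w⟩ ?_
  refine PushoutCocone.IsColimit.mk _ (fun s => ⟨s.inl.map, ?_⟩) (fun s => ?_) (fun s => ?_)
    (fun s m h1 h2 => ?_)
  · intro σ hσ
    rcases hσ with h | h | h
    · exact s.pt.degen_mem _ (isDegen2_map s.inl.map h)
    · exact s.inl.preserves σ (Or.inr h)
    · have hc := congrArg SHom.map s.condition
      have h2 : s.inl.map.app (Opposite.op (SimplexCategory.mk 2)) σ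
          = s.inr.map.app (Opposite.op (SimplexCategory.mk 2)) ⟨σ, h⟩ :=
        congrArg
          (fun (η : (an1Source n i h0 hin).carrier ⟶ s.pt.carrier) =>
            η.app (Opposite.op (SimplexCategory.mk 2))
              (⟨σ, h⟩ : (an1Source n i h0 hin).carrier _⦋2⦌)) hc
      refine (congrArg (· ∈ s.pt.thin) h2).mpr ?_
      exact s.inr.preserves _ (Set.mem_univ _)
  · apply SHom.ext
    exact Category.id_comp _
  · apply SHom.ext
    exact (congrArg SHom.map s.condition).trans (Category.id_comp _)
  · apply SHom.ext
    have h1' := congrArg SHom.map h1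
    exact (Category.id_comp m.map).symm.trans h1'
  

/-- For `n ≠ 3`, the sharp horn inclusion is itself a cobase change of (An1). -/
lemma sq1' (n i : ℕ) (h0 : 0 < i) (hin : i < n)
    (hcl : ∀ σ : (stdSimplex n) _⦋2⦌, σ ∈ (P1 n i h0 hin).thin) :
    IsPushout (an1Map n i h0 hin) (gleft n i h0 hin) (hsharp n i h0 hin)
      ((sharpSimplex n).restrictIncl (hornP n ⟨i, by omega⟩)
        (hornP_closed n ⟨i, by omega⟩)) := by
  have w : an1Map n i h0 hin ≫ hsharp n i h0 hin =
      gleft n i h0 hin ≫ (sharpSimplex n).restrictIncl (hornP n ⟨i, by omega⟩)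
        (hornP_closed n ⟨i, by omega⟩) := by
    apply SHom.ext; rfl
  refine IsPushout.of_isColimit' ⟨w⟩ ?_
  refine PushoutCocone.IsColimit.mk _ (fun s => ⟨s.inl.map, ?_⟩) (fun s => ?_) (fun s => ?_)
    (fun s m h1 h2 => ?_)
  · intro σ _
    rcases hcl σ with h | h | h
    · exact s.pt.degen_mem _ (isDegen2_map s.inl.map h)
    · exact s.inl.preserves σ (Or.inr h)
    · have hc := congrArg SHom.map s.condition
      have h2 : s.inl.map.app (Opposite.op (SimplexCategory.mk 2)) σ
          = s.inr.map.app (Opposite.op (SimplexCategory.mk 2)) ⟨σ, h⟩ :=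
        congrArg
          (fun (η : (an1Source n i h0 hin).carrier ⟶ s.pt.carrier) =>
            η.app (Opposite.op (SimplexCategory.mk 2))
              (⟨σ, h⟩ : (an1Source n i h0 hin).carrier _⦋2⦌)) hc
      refine (congrArg (· ∈ s.pt.thin) h2).mpr ?_
      exact s.inr.preserves _ (Set.mem_univ _)
  · apply SHom.ext
    exact Category.id_comp _
  · apply SHom.ext
    exact (congrArg SHom.map s.condition).trans (Category.id_comp _)
  · apply SHom.ext
    have h1' := congrArg SHom.map h1
    exact (Category.id_comp m.map).symm.trans h1'

/-- The pushout square exhibiting `g2` (for `n = 3`) as a cobase change of (An2). -/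
lemma sq2 {i : ℕ} {h0 : 0 < i} {hin : i < 3} (v : Fin 5 →o Fin 4)
    (hpres : ∀ σ ∈ an2T0,
      (vert v).app (Opposite.op (SimplexCategory.mk 2)) σ ∈ (P1 3 i h0 hin).thin)
    (hcover : ∀ σ : (stdSimplex 3) _⦋2⦌, σ ∈ (P1 3 i h0 hin).thin ∨
      σ = (vert v).app (Opposite.op (SimplexCategory.mk 2))
        (tri (0 : Fin 5) 3 4 (by decide) (by decide)) ∨
      σ = (vert v).app (Opposite.op (SimplexCategory.mk 2))
        (tri (0 : Fin 5) 1 4 (by decide) (by decide))) :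
    IsPushout an2Map (⟨vert v, hpres⟩ : an2Source ⟶ P1 3 i h0 hin)
      (⟨vert v, fun _ _ => Set.mem_univ _⟩ : an2Target ⟶ sharpSimplex 3)
      (g2 3 i h0 hin) := by
  have w : an2Map ≫ (⟨vert v, fun _ _ => Set.mem_univ _⟩ : an2Target ⟶ sharpSimplex 3) =
      (⟨vert v, hpres⟩ : an2Source ⟶ P1 3 i h0 hin) ≫ g2 3 i h0 hin := by
    apply SHom.ext; rfl
  refine IsPushout.of_isColimit' ⟨w⟩ ?_
  refine PushoutCocone.IsColimit.mk _ (fun s => ⟨s.inr.map, ?_⟩) (fun s => ?_) (fun s => ?_)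
    (fun s m h1 h2 => ?_)
  · intro σ _
    have hc := congrArg SHom.map s.condition
    rcases hcover σ with h | h | h
    · exact s.inr.preserves σ h
    · have h2 : s.inr.map.app (Opposite.op (SimplexCategory.mk 2))
          ((vert v).app (Opposite.op (SimplexCategory.mk 2))
            (tri (0 : Fin 5) 3 4 (by decide) (by decide)))
          = s.inl.map.app (Opposite.op (SimplexCategory.mk 2))
            (tri (0 : Fin 5) 3 4 (by decide) (by decide)) :=
        (congrArg
          (fun (η : an2Source.carrier ⟶ s.pt.carrier) =>
            η.app (Opposite.op (SimplexCategory.mk 2))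
              (tri (0 : Fin 5) 3 4 (by decide) (by decide))) hc).symm
      rw [h]; refine (congrArg (· ∈ s.pt.thin) h2).mpr ?_
      exact s.inl.preserves _ (Or.inr (Set.mem_insert _ _))
    · have h2 : s.inr.map.app (Opposite.op (SimplexCategory.mk 2))
          ((vert v).app (Opposite.op (SimplexCategory.mk 2))
            (tri (0 : Fin 5) 1 4 (by decide) (by decide)))
          = s.inl.map.app (Opposite.op (SimplexCategory.mk 2))
            (tri (0 : Fin 5) 1 4 (by decide) (by decide)) :=
        (congrArg
          (fun (η : an2Source.carrier ⟶ s.pt.carrier) =>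
            η.app (Opposite.op (SimplexCategory.mk 2))
              (tri (0 : Fin 5) 1 4 (by decide) (by decide))) hc).symm
      rw [h]; refine (congrArg (· ∈ s.pt.thin) h2).mpr ?_
      exact s.inl.preserves _ (Or.inr (Set.mem_insert_of_mem _ rfl))
  · apply SHom.ext
    exact (congrArg SHom.map s.condition).symm.trans (Category.id_comp _)
  · apply SHom.ext
    exact Category.id_comp _
  · apply SHom.ext
    have h2' := congrArg SHom.map h2
    exact (Category.id_comp m.map).symm.trans h2'

end Squares
/-! ### Classification of the 2-simplices of `Δⁿ` -/

section Classify

lemma classify_ne3 (n i : ℕ) (hn2 : 2 ≤ n) (h0 : 0 < i) (hin : i < n) (hne : n ≠ 3)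
    (σ : (stdSimplex n) _⦋2⦌) : σ ∈ (P1 n i h0 hin).thin := by
  rcases Nat.lt_or_ge n 4 with h4 | h4
  · have hn : n = 2 := by omega
    subst hn
    have hi : i = 1 := by omega
    subst hi
    by_cases e01 : σ 0 = σ 1
    · exact Or.inl (isDegen2_of_01 σ e01)
    by_cases e12 : σ 1 = σ 2
    · exact Or.inl (isDegen2_of_12 σ e12)
    have v01 : (σ 0).val < (σ 1).val :=
      lt_of_le_of_ne (OrderHom.monotone σ (by decide)) (fun hh => e01 (Fin.ext hh))
    have v12 : (σ 1).val < (σ 2).val :=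
      lt_of_le_of_ne (OrderHom.monotone σ (by decide)) (fun hh => e12 (Fin.ext hh))
    have hv : (σ 2).val < 3 := (σ 2).isLt
    refine Or.inr (Or.inl ?_)
    refine (eq_tri σ).trans ?_
    exact tri_congr (Fin.ext (show (σ 0).val = 0 by omega))
      (Fin.ext (show (σ 1).val = 1 by omega)) (Fin.ext (show (σ 2).val = 2 by omega))
  · exact Or.inr (Or.inr (mem_horn_of_big h4 _ σ))

def v1 : Fin 5 →o Fin 4 :=
  ⟨![0, 1, 1, 2, 3], fun a b h => by
    fin_cases a <;> fin_cases b <;> first | (exact absurd h (by decide)) | decide⟩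

def v2 : Fin 5 →o Fin 4 :=
  ⟨![0, 1, 2, 2, 3], fun a b h => by
    fin_cases a <;> fin_cases b <;> first | (exact absurd h (by decide)) | decide⟩

lemma hpres1 {h0 : 0 < 1} {hin : 1 < 3} : ∀ σ ∈ an2T0,
    (vert v1).app (Opposite.op (SimplexCategory.mk 2)) σ ∈ (P1 3 1 h0 hin).thin := by
  intro σ hσ
  rcases hσ with h | h | h | h | h | h
  · exact Or.inl (isDegen2_map (vert v1) h)
  · subst h; rw [vert_tri]
    exact Or.inr (Or.inr (tri_mem_horn ⟨1, by omega⟩ 2 (by decide) (by decide) (by decide) (by decide)))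
  · subst h; rw [vert_tri]
    exact Or.inl (isDegen2_of_01 _ (by decide))
  · subst h; rw [vert_tri]
    exact Or.inr (Or.inr (tri_mem_horn ⟨1, by omega⟩ 3 (by decide) (by decide) (by decide) (by decide)))
  · subst h; rw [vert_tri]
    exact Or.inr (Or.inr (tri_mem_horn ⟨1, by omega⟩ 0 (by decide) (by decide) (by decide) (by decide)))
  · subst h; rw [vert_tri]
    exact Or.inl (isDegen2_of_12 _ (by decide))

lemma hpres2 {h0 : 0 < 2} {hin : 2 < 3} : ∀ σ ∈ an2T0,
    (vert v2).app (Opposite.op (SimplexCategory.mk 2)) σ ∈ (P1 3 2 h0 hin).thin := by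
  intro σ hσ
  rcases hσ with h | h | h | h | h | h
  · exact Or.inl (isDegen2_map (vert v2) h)
  · subst h; rw [vert_tri]
    exact Or.inr (Or.inr (tri_mem_horn ⟨2, by omega⟩ 1 (by decide) (by decide) (by decide) (by decide)))
  · subst h; rw [vert_tri]
    exact Or.inl (isDegen2_of_12 _ (by decide))
  · subst h; rw [vert_tri]
    exact Or.inr (Or.inr (tri_mem_horn ⟨2, by omega⟩ 3 (by decide) (by decide) (by decide) (by decide)))
  · subst h; rw [vert_tri]
    exact Or.inr (Or.inr (tri_mem_horn ⟨2, by omega⟩ 0 (by decide) (by decide) (by decide) (by decide)))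
  · subst h; rw [vert_tri]
    exact Or.inr (Or.inr (tri_mem_horn ⟨2, by omega⟩ 3 (by decide) (by decide) (by decide) (by decide)))

lemma hcover1 {h0 : 0 < 1} {hin : 1 < 3} : ∀ σ : (stdSimplex 3) _⦋2⦌,
    σ ∈ (P1 3 1 h0 hin).thin ∨
    σ = (vert v1).app (Opposite.op (SimplexCategory.mk 2))
      (tri (0 : Fin 5) 3 4 (by decide) (by decide)) ∨
    σ = (vert v1).app (Opposite.op (SimplexCategory.mk 2))
      (tri (0 : Fin 5) 1 4 (by decide) (by decide)) := by
  intro σ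
  by_cases e01 : σ 0 = σ 1
  · exact Or.inl (Or.inl (isDegen2_of_01 σ e01))
  by_cases e12 : σ 1 = σ 2
  · exact Or.inl (Or.inl (isDegen2_of_12 σ e12))
  have v01 : (σ 0).val < (σ 1).val :=
    lt_of_le_of_ne (OrderHom.monotone σ (by decide)) (fun hh => e01 (Fin.ext hh))
  have v12 : (σ 1).val < (σ 2).val :=
    lt_of_le_of_ne (OrderHom.monotone σ (by decide)) (fun hh => e12 (Fin.ext hh))
  have hv : (σ 2).val < 4 := (σ 2).isLt
  by_cases hbad : (σ 0).val = 0 ∧ (σ 1).val = 2 ∧ (σ 2).val = 3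
  · refine Or.inr (Or.inl ?_)
    refine (eq_tri σ).trans ?_
    rw [vert_tri]
    exact tri_congr (Fin.ext (show (σ 0).val = 0 by omega))
      (Fin.ext (show (σ 1).val = 2 by omega)) (Fin.ext (show (σ 2).val = 3 by omega))
  · refine Or.inl (Or.inr (Or.inr ?_))
    have hcases : ((σ 0).val = 0 ∧ (σ 1).val = 1 ∧ (σ 2).val = 2) ∨
        ((σ 0).val = 0 ∧ (σ 1).val = 1 ∧ (σ 2).val = 3) ∨
        ((σ 0).val = 1 ∧ (σ 1).val = 2 ∧ (σ 2).val = 3) := by omega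
    rw [eq_tri σ]
    rcases hcases with ⟨a0, a1, a2⟩ | ⟨a0, a1, a2⟩ | ⟨a0, a1, a2⟩
    · exact tri_mem_horn ⟨1, by omega⟩ ⟨3, by omega⟩ (Fin.ne_of_val_ne (show (3:ℕ) ≠ 1 by omega))
        (Fin.ne_of_val_ne (show (σ 0).val ≠ 3 by omega))
        (Fin.ne_of_val_ne (show (σ 1).val ≠ 3 by omega))
        (Fin.ne_of_val_ne (show (σ 2).val ≠ 3 by omega))
    · exact tri_mem_horn ⟨1, by omega⟩ ⟨2, by omega⟩ (Fin.ne_of_val_ne (show (2:ℕ) ≠ 1 by omega))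
        (Fin.ne_of_val_ne (show (σ 0).val ≠ 2 by omega))
        (Fin.ne_of_val_ne (show (σ 1).val ≠ 2 by omega))
        (Fin.ne_of_val_ne (show (σ 2).val ≠ 2 by omega))
    · exact tri_mem_horn ⟨1, by omega⟩ ⟨0, by omega⟩ (Fin.ne_of_val_ne (show (0:ℕ) ≠ 1 by omega))
        (Fin.ne_of_val_ne (show (σ 0).val ≠ 0 by omega))
        (Fin.ne_of_val_ne (show (σ 1).val ≠ 0 by omega))
        (Fin.ne_of_val_ne (show (σ 2).val ≠ 0 by omega))

lemma hcover2 {h0 : 0 < 2} {hin : 2 < 3} : ∀ σ : (stdSimplex 3) _⦋2⦌,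
    σ ∈ (P1 3 2 h0 hin).thin ∨
    σ = (vert v2).app (Opposite.op (SimplexCategory.mk 2))
      (tri (0 : Fin 5) 3 4 (by decide) (by decide)) ∨
    σ = (vert v2).app (Opposite.op (SimplexCategory.mk 2))
      (tri (0 : Fin 5) 1 4 (by decide) (by decide)) := by
  intro σ
  by_cases e01 : σ 0 = σ 1
  · exact Or.inl (Or.inl (isDegen2_of_01 σ e01))
  by_cases e12 : σ 1 = σ 2
  · exact Or.inl (Or.inl (isDegen2_of_12 σ e12))
  have v01 : (σ 0).val < (σ 1).val :=
    lt_of_le_of_ne (OrderHom.monotone σ (by decide)) (fun hh => e01 (Fin.ext hh))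
  have v12 : (σ 1).val < (σ 2).val :=
    lt_of_le_of_ne (OrderHom.monotone σ (by decide)) (fun hh => e12 (Fin.ext hh))
  have hv : (σ 2).val < 4 := (σ 2).isLt
  by_cases hbad : (σ 0).val = 0 ∧ (σ 1).val = 1 ∧ (σ 2).val = 3
  · refine Or.inr (Or.inr ?_)
    refine (eq_tri σ).trans ?_
    rw [vert_tri]
    exact tri_congr (Fin.ext (show (σ 0).val = 0 by omega))
      (Fin.ext (show (σ 1).val = 1 by omega)) (Fin.ext (show (σ 2).val = 3 by omega))
  · refine Or.inl (Or.inr (Or.inr ?_))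
    have hcases : ((σ 0).val = 0 ∧ (σ 1).val = 1 ∧ (σ 2).val = 2) ∨
        ((σ 0).val = 0 ∧ (σ 1).val = 2 ∧ (σ 2).val = 3) ∨
        ((σ 0).val = 1 ∧ (σ 1).val = 2 ∧ (σ 2).val = 3) := by omega
    rw [eq_tri σ]
    rcases hcases with ⟨a0, a1, a2⟩ | ⟨a0, a1, a2⟩ | ⟨a0, a1, a2⟩
    · exact tri_mem_horn ⟨2, by omega⟩ ⟨3, by omega⟩ (Fin.ne_of_val_ne (show (3:ℕ) ≠ 2 by omega))
        (Fin.ne_of_val_ne (show (σ 0).val ≠ 3 by omega))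
        (Fin.ne_of_val_ne (show (σ 1).val ≠ 3 by omega))
        (Fin.ne_of_val_ne (show (σ 2).val ≠ 3 by omega))
    · exact tri_mem_horn ⟨2, by omega⟩ ⟨1, by omega⟩ (Fin.ne_of_val_ne (show (1:ℕ) ≠ 2 by omega))
        (Fin.ne_of_val_ne (show (σ 0).val ≠ 1 by omega))
        (Fin.ne_of_val_ne (show (σ 1).val ≠ 1 by omega))
        (Fin.ne_of_val_ne (show (σ 2).val ≠ 1 by omega))
    · exact tri_mem_horn ⟨2, by omega⟩ ⟨0, by omega⟩ (Fin.ne_of_val_ne (show (0:ℕ) ≠ 2 by omega))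
        (Fin.ne_of_val_ne (show (σ 0).val ≠ 0 by omega))
        (Fin.ne_of_val_ne (show (σ 1).val ≠ 0 by omega))
        (Fin.ne_of_val_ne (show (σ 2).val ≠ 0 by omega))

end Classify
/-- For every `n ≥ 2` and `0 < i < n`, the inclusion
`(Λⁿᵢ)♯ → (Δⁿ)♯` of the inner horn with all of its 2-simplices thin into the
`n`-simplex with all of its 2-simplices thin is scaled anodyne. -/
theorem sharp_horn_inclusion_scaledAnodyne (n i : ℕ) (hn2 : 2 ≤ n)
    (h0 : 0 < i) (hin : i < n) :
    ScaledAnodyne ((sharpSimplex n).restrictIncl (hornP n ⟨i, by omega⟩)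
      (hornP_closed n ⟨i, by omega⟩)) := by
  intro P hWS hGen
  by_cases h3 : n = 3
  · subst h3
    have hg1 : P (g1 3 i h0 hin) :=
      hWS.pushouts _ _ _ _ (sq1 3 i h0 hin) (hGen _ (AnodyneGenerator.an1 3 i h0 hin))
    interval_cases i
    · have hg2 : P (g2 3 1 h0 hin) :=
        hWS.pushouts _ _ _ _ (sq2 v1 hpres1 hcover1) (hGen _ AnodyneGenerator.an2)
      exact hWS.mem_comp hg1 hg2
    · have hg2 : P (g2 3 2 h0 hin) :=
        hWS.pushouts _ _ _ _ (sq2 v2 hpres2 hcover2) (hGen _ AnodyneGenerator.an2)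
      exact hWS.mem_comp hg1 hg2
  · exact hWS.pushouts _ _ _ _ (sq1' n i h0 hin (classify_ne3 n i hn2 h0 hin h3))
      (hGen _ (AnodyneGenerator.an1 n i h0 hin))

end ScaledSSet
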